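/- arXiv:1406.1008 — 9 statements merged into one kernel-verified Lean document; each statement's English description precedes it below -/
import Mathlib

section
/- Let P be an n×n nonnegative real symmetric matrix with no all-zero rows, and let x be a vector in R^n with all entries positive. Define the diagonal matrix D with D_ii = (Px)_i / x_i. Then the matrix D + P is positive semi-definite. -/
/-!
The quadratic form of `D + P` at `y` is `∑ i j, P i j * (x j / x i * y i ^ 2 + y i * y j)`.
Pairing the `(i, j)` and `(j, i)` summands, which symmetry of `P` allows, each pair equals
`P i j * (x j * y i + x i * y j) ^ 2 / (x i * x j) ≥ 0`.
-/

open Matrix Finset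

lemma sum_sum_nonneg_of_add_swap_nonneg {ι R : Type*} [Fintype ι] [AddCommGroup R] [LinearOrder R]
    [IsOrderedAddMonoid R] {f : ι → ι → R} (h : ∀ i j, 0 ≤ f i j + f j i) :
    0 ≤ ∑ i, ∑ j, f i j := by
  refine nonneg_add_self_iff.mp ?_
  calc (0 : R) ≤ ∑ i, ∑ j, (f i j + f j i) := sum_nonneg fun i _ => sum_nonneg fun j _ => h i j
    _ = ∑ i, ∑ j, f i j + ∑ i, ∑ j, f i j := by
      simp only [sum_add_distrib]
      rw [sum_comm (f := fun i j => f j i)]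

section

variable {ι : Type*} [Fintype ι] [DecidableEq ι]

lemma dotProduct_diagonal_mulVec_div_add_mulVec (P : Matrix ι ι ℝ) (x y : ι → ℝ) :
    y ⬝ᵥ ((diagonal fun i => (P *ᵥ x) i / x i) + P) *ᵥ y
      = ∑ i, ∑ j, P i j * (x j / x i * y i ^ 2 + y i * y j) := by
  rw [add_mulVec, dotProduct_add]
  simp only [dotProduct, mulVec_diagonal, ← sum_add_distrib]
  refine sum_congr rfl fun i _ => ?_
  simp only [mulVec, dotProduct, sum_div, sum_mul, mul_sum, ← sum_add_distrib]
  exact sum_congr rfl fun j _ => by ring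

lemma add_swap_eq_mul_sq_div {p a b u v : ℝ} (ha : a ≠ 0) (hb : b ≠ 0) :
    p * (b / a * u ^ 2 + u * v) + p * (a / b * v ^ 2 + v * u)
      = p * (b * u + a * v) ^ 2 / (a * b) := by
  field_simp
  ring

theorem posSemidef_diagonal_mulVec_div_add {P : Matrix ι ι ℝ} (hsymm : P.IsSymm)
    (hnonneg : ∀ i j, 0 ≤ P i j) {x : ι → ℝ} (hx : ∀ i, 0 < x i) :
    ((diagonal fun i => (P *ᵥ x) i / x i) + P).PosSemidef := by
  refine .of_dotProduct_mulVec_nonneg ?_ fun y => ?_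
  · exact (isHermitian_diagonal _).add (isHermitian_iff_isSymm.mpr hsymm)
  rw [star_trivial, dotProduct_diagonal_mulVec_div_add_mulVec]
  refine sum_sum_nonneg_of_add_swap_nonneg fun i j => ?_
  rw [hsymm.apply i j, add_swap_eq_mul_sq_div (hx i).ne' (hx j).ne']
  exact div_nonneg (mul_nonneg (hnonneg i j) (sq_nonneg _)) (mul_pos (hx i) (hx j)).le

end

theorem stmt0_general (n : ℕ) (P : Matrix (Fin n) (Fin n) ℝ)
    (hsymm : P.IsSymm) (hnonneg : ∀ i j, 0 ≤ P i j)
    (x : Fin n → ℝ) (hx : ∀ i, 0 < x i) :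
    (Matrix.diagonal (fun i => P.mulVec x i / x i) + P).PosSemidef :=
  posSemidef_diagonal_mulVec_div_add hsymm hnonneg hx

theorem stmt0 (n : ℕ) (P : Matrix (Fin n) (Fin n) ℝ)
    (hsymm : P.IsSymm) (hnonneg : ∀ i j, 0 ≤ P i j)
    (hrows : ∀ i, ∃ j, 0 < P i j)
    (x : Fin n → ℝ) (hx : ∀ i, 0 < x i) :
    (Matrix.diagonal (fun i => P.mulVec x i / x i) + P).PosSemidef :=
  stmt0_general n P hsymm hnonneg x hx
end

section
/- Let P be an n×n nonnegative real symmetric matrix with no all-zero rows, and let x be a vector in R^n with all entries positive. Define the diagonal matrix D with D_ii = (Px)_i / x_i. Then the matrix D − P is positive semi-definite. -/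
/-! Conjugating by `diagonal x` turns `D - P` into the weighted Laplacian `diag(Q 1) - Q` of the
nonnegative symmetric matrix `Q = diag(x) P diag(x)`, whose quadratic form is
`½ ∑ᵢⱼ Qᵢⱼ (yᵢ - yⱼ)²`. -/

open Finset

namespace Matrix

variable {ι : Type*} [Fintype ι] [DecidableEq ι]

theorem IsSymm.two_mul_dotProduct_diagonal_sum_sub_mulVec {Q : Matrix ι ι ℝ} (hQ : Q.IsSymm)
    (y : ι → ℝ) :
    2 * (y ⬝ᵥ (diagonal (fun i => ∑ j, Q i j) - Q) *ᵥ y)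
      = ∑ i, ∑ j, Q i j * (y i - y j) ^ 2 := by
  have hswap : ∑ i, ∑ j, Q i j * y j ^ 2 = ∑ i, ∑ j, Q i j * y i ^ 2 := by
    rw [sum_comm]
    simp_rw [hQ.apply]
  have hform : y ⬝ᵥ (diagonal (fun i => ∑ j, Q i j) - Q) *ᵥ y
      = ∑ i, ∑ j, Q i j * y i ^ 2 - ∑ i, ∑ j, Q i j * y i * y j := by
    rw [sub_mulVec, dotProduct_sub]
    simp only [dotProduct, mulVec_diagonal]
    simp only [mulVec, dotProduct, mul_sum, sum_mul]
    congr 1 <;> refine sum_congr rfl fun i _ => sum_congr rfl fun j _ => ?_ <;> ring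
  rw [hform, mul_sub, two_mul]
  nth_rw 2 [← hswap]
  simp only [mul_sum, ← sum_add_distrib, ← sum_sub_distrib]
  refine sum_congr rfl fun i _ => sum_congr rfl fun j _ => ?_
  ring

theorem posSemidef_diagonal_sum_sub {Q : Matrix ι ι ℝ} (hQ : Q.IsSymm)
    (hnonneg : ∀ i j, 0 ≤ Q i j) :
    (diagonal (fun i => ∑ j, Q i j) - Q).PosSemidef := by
  refine .of_dotProduct_mulVec_nonneg ?_ fun y => ?_
  · exact (isHermitian_diagonal _).sub (isHermitian_iff_isSymm.mpr hQ)
  · have hsq : 0 ≤ ∑ i, ∑ j, Q i j * (y i - y j) ^ 2 :=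
      sum_nonneg fun i _ => sum_nonneg fun j _ => mul_nonneg (hnonneg i j) (sq_nonneg _)
    rw [← hQ.two_mul_dotProduct_diagonal_sum_sub_mulVec] at hsq
    rw [star_trivial]
    linarith

theorem diagonal_mulVec_div_sub_eq {P : Matrix ι ι ℝ} {x : ι → ℝ} (hx : ∀ i, x i ≠ 0) :
    diagonal (fun i => (P *ᵥ x) i / x i) - P
      = diagonal x⁻¹ * (diagonal (fun i => ∑ j, (diagonal x * P * diagonal x) i j)
          - diagonal x * P * diagonal x) * diagonal x⁻¹ := by
  ext i j
  rcases eq_or_ne i j with rfl | hij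
  · simp only [mulVec, dotProduct, sub_apply, diagonal_apply_eq, mul_diagonal, diagonal_mul,
      mul_assoc, ← mul_sum, Pi.inv_apply]
    field_simp [hx i]
  · simp only [sub_apply, diagonal_apply_ne _ hij, zero_sub, mul_diagonal, diagonal_mul,
      Pi.inv_apply, mul_neg, neg_mul, neg_inj]
    field_simp [hx i, hx j]

end Matrix

open Matrix

theorem stmt1_general (n : ℕ) (P : Matrix (Fin n) (Fin n) ℝ)
    (hsymm : P.IsSymm) (hnonneg : ∀ i j, 0 ≤ P i j)
    (x : Fin n → ℝ) (hx : ∀ i, 0 < x i) :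
    (Matrix.diagonal (fun i => P.mulVec x i / x i) - P).PosSemidef := by
  have hQ : (diagonal x * P * diagonal x).IsSymm := IsSymm.ext fun i j => by
    simp only [mul_diagonal, diagonal_mul, hsymm.apply]
    ring
  have hQnonneg : ∀ i j, 0 ≤ (diagonal x * P * diagonal x) i j := fun i j => by
    simp only [mul_diagonal, diagonal_mul]
    exact mul_nonneg (mul_nonneg (hx i).le (hnonneg i j)) (hx j).le
  have hconj := (posSemidef_diagonal_sum_sub hQ hQnonneg).mul_mul_conjTranspose_same
    (diagonal x⁻¹)
  rw [diagonal_conjTranspose, star_trivial] at hconj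
  rw [diagonal_mulVec_div_sub_eq fun i => (hx i).ne']
  exact hconj

theorem stmt1 (n : ℕ) (P : Matrix (Fin n) (Fin n) ℝ)
    (hsymm : P.IsSymm) (hnonneg : ∀ i j, 0 ≤ P i j)
    (hrows : ∀ i, ∃ j, 0 < P i j)
    (x : Fin n → ℝ) (hx : ∀ i, 0 < x i) :
    (Matrix.diagonal (fun i => P.mulVec x i / x i) - P).PosSemidef :=
  stmt1_general n P hsymm hnonneg x hx
end

section
/- Let P be an n×n nonnegative symmetric matrix, x ∈ R^n a positive vector, and z ∈ R^n arbitrary. Then Σ_{i,j} (D_{ij} + P_{ij}) x_i x_j z_i z_j = (1/2) Σ_{i,j} P_{ij} x_i x_j (z_i + z_j)^2, where D is diagonal with D_ii = (Px)_i / x_i. In particular the left-hand side is nonnegative. -/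
open Matrix Finset

/-!
Since `D i i * x i = (P x) i`, the diagonal part of the quadratic form is
`∑ i j, P i j x i x j z i ^ 2`. Symmetrising this term and
adding the off-diagonal part `∑ i j, P i j x i x j z i z j` gives half of
`∑ i j, P i j x i x j (z i + z j) ^ 2`, which is visibly nonnegative.
-/

theorem sum_sum_mul_add_sq_of_symm {ι R : Type*} [Fintype ι] [CommRing R] (W : ι → ι → R)
    (hW : ∀ i j, W j i = W i j) (z : ι → R) :
    ∑ i, ∑ j, W i j * (z i + z j) ^ 2 = 2 * ∑ i, ∑ j, W i j * (z i ^ 2 + z i * z j) := by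
  have hswap : ∑ i, ∑ j, W i j * z j ^ 2 = ∑ i, ∑ j, W i j * z i ^ 2 := by
    rw [Finset.sum_comm]
    simp only [hW]
  calc ∑ i, ∑ j, W i j * (z i + z j) ^ 2
      = ∑ i, ∑ j, W i j * z i ^ 2 + ∑ i, ∑ j, W i j * z j ^ 2
          + 2 * ∑ i, ∑ j, W i j * (z i * z j) := by
        simp only [Finset.mul_sum, ← Finset.sum_add_distrib]
        exact Finset.sum_congr rfl fun i _ => Finset.sum_congr rfl fun j _ => by ring
    _ = 2 * ∑ i, ∑ j, W i j * (z i ^ 2 + z i * z j) := by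
        rw [hswap]
        simp only [Finset.mul_sum, ← Finset.sum_add_distrib]
        exact Finset.sum_congr rfl fun i _ => Finset.sum_congr rfl fun j _ => by ring

theorem sum_sum_diagonal_mulVec_div_mul {ι K : Type*} [Fintype ι] [DecidableEq ι] [Field K]
    (P : Matrix ι ι K) (x : ι → K) (hx : ∀ i, x i ≠ 0) (z : ι → K) :
    ∑ i, ∑ j, diagonal (fun i => (P *ᵥ x) i / x i) i j * x i * x j * z i * z j
      = ∑ i, ∑ j, P i j * x i * x j * z i ^ 2 := by
  refine Finset.sum_congr rfl fun i _ => ?_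
  rw [Finset.sum_eq_single_of_mem i (Finset.mem_univ i)
    fun j _ hji => by simp [diagonal_apply_ne _ hji.symm]]
  simp only [diagonal_apply_eq, div_mul_cancel₀ _ (hx i), mulVec, dotProduct, Finset.sum_mul]
  exact Finset.sum_congr rfl fun j _ => by ring

theorem stmt2 (n : ℕ) (P : Matrix (Fin n) (Fin n) ℝ)
    (hsymm : P.IsSymm) (hnonneg : ∀ i j, 0 ≤ P i j)
    (x : Fin n → ℝ) (hx : ∀ i, 0 < x i) (z : Fin n → ℝ)
    (D : Matrix (Fin n) (Fin n) ℝ)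
    (hD : D = Matrix.diagonal (fun i => P.mulVec x i / x i)) :
    (∑ i, ∑ j, (D i j + P i j) * x i * x j * z i * z j
      = (1/2) * ∑ i, ∑ j, P i j * x i * x j * (z i + z j)^2) ∧
    0 ≤ ∑ i, ∑ j, (D i j + P i j) * x i * x j * z i * z j := by
  have hW : ∀ i j, P j i * x j * x i = P i j * x i * x j := fun i j => by
    rw [hsymm.apply i j]; ring
  have key : ∑ i, ∑ j, (D i j + P i j) * x i * x j * z i * z j
      = (1/2) * ∑ i, ∑ j, P i j * x i * x j * (z i + z j)^2 := by
    rw [sum_sum_mul_add_sq_of_symm _ hW, ← mul_assoc, one_div_mul_cancel two_ne_zero, one_mul]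
    simp only [hD, add_mul, Finset.sum_add_distrib,
      sum_sum_diagonal_mulVec_div_mul P x (fun i => (hx i).ne') z, mul_add]
    simp only [mul_assoc]
  refine ⟨key, key ▸ mul_nonneg one_half_pos.le ?_⟩
  exact Finset.sum_nonneg fun i _ => Finset.sum_nonneg fun j _ =>
    mul_nonneg (mul_nonneg (mul_nonneg (hnonneg i j) (hx i).le) (hx j).le) (sq_nonneg _)
end

section
/- Let Q ∈ R^{n×n} be symmetric, h ∈ R^n, δ > 0, and F(x) = (1/2)xᵀQx − xᵀh. For positive vectors x, y, define D(y) diagonal with D(y)_ii = ((|Q|y)_i + h_i^- + δ)/y_i, and G(x,y) = F(y) + (x−y)ᵀ∇F(y) + (1/2)(x−y)ᵀD(y)(x−y). Then G(x,y) > F(x) whenever x ≠ y, and G(x,x) = F(x); i.e., G is an auxiliary function for F on positive vectors. -/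
/-!
Since `F` is quadratic, `G x y - F x = ½ zᵀ (D y - Q) z` with `z = x - y`. Split
`D y - Q = (diag((|Q| y)ᵢ / yᵢ) - Q) + diag((hᵢ⁻ + δ) / yᵢ)`. The first summand is positive
semidefinite: bound each `zᵢ Qᵢⱼ zⱼ` by the weighted AM-GM inequality
`2 |zᵢ zⱼ| ≤ (yⱼ / yᵢ) zᵢ² + (yᵢ / yⱼ) zⱼ²` and use the symmetry of `Q` to collect the two halves.
The second summand is positive definite because `δ > 0`.
-/

open Matrix Finset

variable {ι : Type*} [Fintype ι]

theorem Matrix.IsSymm.dotProduct_mulVec_comm {R : Type*} [CommSemiring R] {Q : Matrix ι ι R}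
    (hQ : Q.IsSymm) (u v : ι → R) : u ⬝ᵥ Q *ᵥ v = v ⬝ᵥ Q *ᵥ u := by
  rw [dotProduct_mulVec, dotProduct_comm, ← mulVec_transpose, hQ.eq]

theorem Matrix.IsSymm.dotProduct_mulVec_self_eq {R : Type*} [CommRing R] {Q : Matrix ι ι R}
    (hQ : Q.IsSymm) (x y : ι → R) :
    x ⬝ᵥ Q *ᵥ x = y ⬝ᵥ Q *ᵥ y + 2 * ((x - y) ⬝ᵥ Q *ᵥ y) + (x - y) ⬝ᵥ Q *ᵥ (x - y) := by
  simp only [sub_dotProduct, mulVec_sub, dotProduct_sub, hQ.dotProduct_mulVec_comm y x]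
  ring

theorem two_mul_abs_mul_le_div_mul_sq_add {a b s t : ℝ} (hs : 0 < s) (ht : 0 < t) :
    2 * |a * b| ≤ s / t * a ^ 2 + t / s * b ^ 2 := by
  rw [div_mul_eq_mul_div, div_mul_eq_mul_div, div_add_div _ _ ht.ne' hs.ne',
    le_div_iff₀ (by positivity), abs_mul, ← sq_abs a, ← sq_abs b]
  linarith [sq_nonneg (s * |a| - t * |b|)]

theorem Matrix.IsSymm.dotProduct_mulVec_self_le {Q : Matrix ι ι ℝ} (hQ : Q.IsSymm)
    {y : ι → ℝ} (hy : ∀ i, 0 < y i) (z : ι → ℝ) :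
    z ⬝ᵥ Q *ᵥ z ≤ ∑ i, (Q.map abs *ᵥ y) i / y i * z i ^ 2 := by
  have hpair : ∀ i j, z i * Q i j * z j
      ≤ |Q i j| * (y j / y i * z i ^ 2 + y i / y j * z j ^ 2) / 2 := by
    intro i j
    have hamgm := mul_le_mul_of_nonneg_left
      (two_mul_abs_mul_le_div_mul_sq_add (a := z i) (b := z j) (hy j) (hy i)) (abs_nonneg (Q i j))
    have habs : |z i * Q i j * z j| = |Q i j| * |z i * z j| := by
      simp only [abs_mul]; ring
    linarith [le_abs_self (z i * Q i j * z j)]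
  have hswap : ∑ i, ∑ j, |Q i j| * (y i / y j * z j ^ 2)
      = ∑ i, ∑ j, |Q i j| * (y j / y i * z i ^ 2) := by
    rw [sum_comm]
    exact sum_congr rfl fun i _ => sum_congr rfl fun j _ => by rw [hQ.apply i j]
  calc z ⬝ᵥ Q *ᵥ z = ∑ i, ∑ j, z i * Q i j * z j := by
        simp only [dotProduct, mulVec, mul_sum]
        exact sum_congr rfl fun i _ => sum_congr rfl fun j _ => by ring
    _ ≤ ∑ i, ∑ j, |Q i j| * (y j / y i * z i ^ 2 + y i / y j * z j ^ 2) / 2 :=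
        sum_le_sum fun i _ => sum_le_sum fun j _ => hpair i j
    _ = ∑ i, ∑ j, |Q i j| * (y j / y i * z i ^ 2) := by
        simp only [mul_add, add_div, sum_add_distrib, ← sum_div, hswap]
        ring
    _ = ∑ i, (Q.map abs *ᵥ y) i / y i * z i ^ 2 := by
        simp only [mulVec, dotProduct, map_apply, sum_div, sum_mul]
        exact sum_congr rfl fun i _ => sum_congr rfl fun j _ => by ring

theorem dotProduct_diagonal_mulVec_self {R : Type*} [CommSemiring R] [DecidableEq ι]
    (d z : ι → R) : z ⬝ᵥ diagonal d *ᵥ z = ∑ i, d i * z i ^ 2 := by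
  simp only [dotProduct, mulVec_diagonal]
  exact sum_congr rfl fun i _ => by ring

theorem dotProduct_diagonal_mulVec_self_pos [DecidableEq ι] {d z : ι → ℝ} (hd : ∀ i, 0 < d i)
    (hz : z ≠ 0) : 0 < z ⬝ᵥ diagonal d *ᵥ z := by
  obtain ⟨i, hi⟩ := Function.ne_iff.mp hz
  rw [dotProduct_diagonal_mulVec_self]
  exact sum_pos' (fun j _ => by have := hd j; positivity)
    ⟨i, mem_univ i, mul_pos (hd i) (sq_pos_of_ne_zero hi)⟩

theorem stmt6_general (n : ℕ) (Q : Matrix (Fin n) (Fin n) ℝ) (hQ : Q.IsSymm)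
    (h : Fin n → ℝ) (δ : ℝ) (hδ : 0 < δ)
    (F : (Fin n → ℝ) → ℝ)
    (hF : ∀ x, F x = (1/2) * (x ⬝ᵥ Q.mulVec x) - x ⬝ᵥ h)
    (x y : Fin n → ℝ) (hy : ∀ i, 0 < y i)
    (D : (Fin n → ℝ) → Matrix (Fin n) (Fin n) ℝ)
    (hD : ∀ v, D v = Matrix.diagonal
      (fun i => ((Matrix.of fun i j => |Q i j|).mulVec v i
        + max (-(h i)) 0 + δ) / v i))
    (G : (Fin n → ℝ) → (Fin n → ℝ) → ℝ)
    (hG : ∀ u v, G u v = F v + (u - v) ⬝ᵥ (Q.mulVec v - h)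
      + (1/2) * ((u - v) ⬝ᵥ (D v).mulVec (u - v))) :
    (x ≠ y → F x < G x y) ∧ G x x = F x := by
  refine ⟨fun hxy => ?_, by rw [hG, sub_self]; simp⟩
  have hDy : D y = diagonal (fun i => (Q.map abs *ᵥ y) i / y i)
      + diagonal (fun i => (max (-(h i)) 0 + δ) / y i) := by
    rw [hD, diagonal_add]
    congr 1
    ext i
    rw [add_assoc, add_div]
    rfl
  have hexpand := hQ.dotProduct_mulVec_self_eq x y
  have hQ_le := hQ.dotProduct_mulVec_self_le hy (x - y)
  have hpos := dotProduct_diagonal_mulVec_self_pos (d := fun i => (max (-(h i)) 0 + δ) / y i)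
    (fun i => by have := hy i; positivity) (sub_ne_zero.mpr hxy)
  rw [hG, hF, hF, hDy, add_mulVec, dotProduct_add, dotProduct_diagonal_mulVec_self,
    dotProduct_sub, sub_dotProduct x y h]
  linarith

theorem stmt6 (n : ℕ) (Q : Matrix (Fin n) (Fin n) ℝ) (hQ : Q.IsSymm)
    (h : Fin n → ℝ) (δ : ℝ) (hδ : 0 < δ)
    (F : (Fin n → ℝ) → ℝ)
    (hF : ∀ x, F x = (1/2) * (x ⬝ᵥ Q.mulVec x) - x ⬝ᵥ h)
    (x y : Fin n → ℝ) (hx : ∀ i, 0 < x i) (hy : ∀ i, 0 < y i)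
    (D : (Fin n → ℝ) → Matrix (Fin n) (Fin n) ℝ)
    (hD : ∀ v, D v = Matrix.diagonal
      (fun i => ((Matrix.of fun i j => |Q i j|).mulVec v i
        + max (-(h i)) 0 + δ) / v i))
    (G : (Fin n → ℝ) → (Fin n → ℝ) → ℝ)
    (hG : ∀ u v, G u v = F v + (u - v) ⬝ᵥ (Q.mulVec v - h)
      + (1/2) * ((u - v) ⬝ᵥ (D v).mulVec (u - v))) :
    (x ≠ y → F x < G x y) ∧ G x x = F x :=
  stmt6_general n Q hQ h δ hδ F hF x y hy D hD G hG
end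

section
/- Let Q ∈ R^{n×n} be symmetric, y ∈ R^n a positive vector, h ∈ R^n, δ > 0. Then the matrix D(y) − Q is positive definite, where D(y) is diagonal with D(y)_ii = ((|Q|y)_i + h_i^- + δ)/y_i. -/
/-!
The weighted AM-GM inequality `2 q u v ≤ |q| ((y_j / y_i) u² + (y_i / y_j) v²)` bounds each
term `Q_ij x_i x_j` of the quadratic form of `Q`; summing over `(i, j)` and using the symmetry
of `Q` shows that `diag((|Q| y)_i / y_i) - Q` is positive semidefinite. The remaining diagonal part
`diag((h_i⁻ + δ) / y_i)` has positive entries, so the sum is positive definite.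
-/

open Matrix Finset

lemma two_mul_mul_mul_le_abs_mul_weighted_sq (q u v a b : ℝ) (ha : 0 < a) (hb : 0 < b) :
    2 * (q * u * v) ≤ |q| * (b / a * u ^ 2 + a / b * v ^ 2) := by
  have amgm : 2 * (|u| * |v|) ≤ b / a * u ^ 2 + a / b * v ^ 2 := by
    rw [div_mul_eq_mul_div, div_mul_eq_mul_div, div_add_div _ _ ha.ne' hb.ne',
      le_div_iff₀ (mul_pos ha hb)]
    have key := sq_nonneg (b * |u| - a * |v|)
    rw [sub_sq, mul_pow, mul_pow, sq_abs, sq_abs] at key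
    linarith
  calc 2 * (q * u * v) ≤ |2 * (q * u * v)| := le_abs_self _
    _ = |q| * (2 * (|u| * |v|)) := by simp only [abs_mul, abs_two]; ring
    _ ≤ |q| * (b / a * u ^ 2 + a / b * v ^ 2) := by gcongr

namespace Matrix.IsSymm

variable {ι : Type*} [Fintype ι] {Q : Matrix ι ι ℝ} {y : ι → ℝ}

lemma dotProduct_mulVec_self_le_s7 (hQ : Q.IsSymm) (hy : ∀ i, 0 < y i) (x : ι → ℝ) :
    x ⬝ᵥ (Q *ᵥ x) ≤ ∑ i, ((of fun i j => |Q i j|) *ᵥ y) i / y i * x i ^ 2 := by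
  set T := ∑ i, ∑ j, |Q i j| * (y j / y i * x i ^ 2)
  have rhs_eq : ∑ i, ((of fun i j => |Q i j|) *ᵥ y) i / y i * x i ^ 2 = T := by
    simp only [mulVec, dotProduct, of_apply, sum_div, sum_mul, T]
    exact sum_congr rfl fun i _ => sum_congr rfl fun j _ => by ring
  have transposed_eq : ∑ i, ∑ j, |Q i j| * (y i / y j * x j ^ 2) = T := by
    rw [sum_comm]
    exact sum_congr rfl fun i _ => sum_congr rfl fun j _ => by rw [hQ.apply i j]
  have twice_le : 2 * (x ⬝ᵥ (Q *ᵥ x)) ≤ 2 * T := calc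
    2 * (x ⬝ᵥ (Q *ᵥ x)) = ∑ i, ∑ j, 2 * (Q i j * x i * x j) := by
      simp only [dotProduct, mulVec, mul_sum]
      exact sum_congr rfl fun i _ => sum_congr rfl fun j _ => by ring
    _ ≤ ∑ i, ∑ j, |Q i j| * (y j / y i * x i ^ 2 + y i / y j * x j ^ 2) :=
      sum_le_sum fun i _ => sum_le_sum fun j _ =>
        two_mul_mul_mul_le_abs_mul_weighted_sq _ _ _ _ _ (hy i) (hy j)
    _ = T + ∑ i, ∑ j, |Q i j| * (y i / y j * x j ^ 2) := by
      simp only [mul_add, sum_add_distrib, T]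
    _ = 2 * T := by rw [transposed_eq]; ring
  rw [rhs_eq]
  linarith

lemma posSemidef_diagonal_sub [DecidableEq ι] (hQ : Q.IsSymm) (hy : ∀ i, 0 < y i) :
    (diagonal (fun i => ((of fun i j => |Q i j|) *ᵥ y) i / y i) - Q).PosSemidef := by
  refine .of_dotProduct_mulVec_nonneg ((isHermitian_diagonal _).sub hQ) fun x => ?_
  have diagonal_form :
      x ⬝ᵥ (diagonal (fun i => ((of fun i j => |Q i j|) *ᵥ y) i / y i) *ᵥ x) =
        ∑ i, ((of fun i j => |Q i j|) *ᵥ y) i / y i * x i ^ 2 := by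
    simp only [dotProduct, mulVec_diagonal]
    exact sum_congr rfl fun i _ => by ring
  rw [star_trivial, sub_mulVec, dotProduct_sub, diagonal_form, sub_nonneg]
  exact hQ.dotProduct_mulVec_self_le_s7 hy x

end Matrix.IsSymm

theorem stmt7 (n : ℕ) (Q : Matrix (Fin n) (Fin n) ℝ) (hQ : Q.IsSymm)
    (h : Fin n → ℝ) (δ : ℝ) (hδ : 0 < δ)
    (y : Fin n → ℝ) (hy : ∀ i, 0 < y i) :
    (Matrix.diagonal
      (fun i => ((Matrix.of fun i j => |Q i j|).mulVec y i
        + max (-(h i)) 0 + δ) / y i) - Q).PosDef := by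
  have split :
      diagonal (fun i => (((of fun i j => |Q i j|) *ᵥ y) i + max (-(h i)) 0 + δ) / y i) - Q =
        (diagonal (fun i => ((of fun i j => |Q i j|) *ᵥ y) i / y i) - Q)
        + diagonal (fun i => (max (-(h i)) 0 + δ) / y i) := by
    rw [sub_add_eq_add_sub, diagonal_add]
    congr 2
    funext i
    ring
  rw [split]
  exact PosDef.posSemidef_add (hQ.posSemidef_diagonal_sub hy) <|
    .diagonal fun i => div_pos (by positivity) (hy i)
end

section
/- For the multiplicative update x_i^{k+1} = x_i^k · (2(Q^- x^k)_i + h_i^+ + δ)/((|Q| x^k)_i + h_i^- + δ), the increment satisfies x_i^{k+1} − x_i^k = −γ_i^k ((Qx^k)_i − h_i), where γ_i^k = x_i^k / ((|Q|x^k)_i + h_i^- + δ). Hence the update is a (coordinate-wise scaled) gradient descent step for F(x) = (1/2)xᵀQx − xᵀh. -/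
/-!
Entrywise, `2 Q⁻ - |Q| = Q⁻ - Q⁺ = -Q` and `h⁺ - h⁻ = h`, so the numerator of the update factor
equals its denominator minus `(Q x)_i - h_i`. Writing `x_i N / D - x_i = -(x_i / D) (D - N)`
turns the multiplicative update into a scaled gradient step; the denominator is positive
because `x > 0`, `|Q| ≥ 0`, `h⁻ ≥ 0` and `δ > 0`.
-/

open Matrix

lemma two_nsmul_negPart_sub_abs {α : Type*} [AddCommGroup α] [Lattice α] [AddLeftMono α]
    (a : α) : 2 • a⁻ - |a| = -a :=
  calc 2 • a⁻ - |a| = a⁻ - a⁺ := by rw [← posPart_add_negPart, two_nsmul]; abel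
    _ = -a := by rw [← neg_sub, posPart_sub_negPart]

namespace Matrix

variable {m n R : Type*}

lemma two_nsmul_map_negPart_sub_map_abs [AddCommGroup R] [Lattice R] [AddLeftMono R]
    (Q : Matrix m n R) : 2 • Q.map (·⁻) - Q.map (|·|) = -Q := by
  ext i j
  exact two_nsmul_negPart_sub_abs (Q i j)

variable [Fintype n]

lemma two_nsmul_map_negPart_mulVec_sub_map_abs_mulVec [Ring R] [Lattice R] [AddLeftMono R]
    (Q : Matrix m n R) (x : n → R) :
    2 • (Q.map (·⁻) *ᵥ x) - Q.map (|·|) *ᵥ x = -(Q *ᵥ x) := by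
  rw [← smul_mulVec, ← sub_mulVec, two_nsmul_map_negPart_sub_map_abs, neg_mulVec]

lemma mulVec_nonneg [Semiring R] [PartialOrder R] [IsOrderedRing R] {A : Matrix m n R}
    {x : n → R} (hA : ∀ i j, 0 ≤ A i j) (hx : ∀ j, 0 ≤ x j) : 0 ≤ A *ᵥ x :=
  fun i => dotProduct_nonneg_of_nonneg (hA i) hx

end Matrix

lemma mul_div_sub_self_eq_neg_div_mul_sub {K : Type*} [Field K] {x N D : K} (hD : D ≠ 0) :
    x * N / D - x = -(x / D) * (D - N) := by
  field_simp
  ring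

theorem stmt9 (n : ℕ) (Q : Matrix (Fin n) (Fin n) ℝ)
    (h : Fin n → ℝ) (δ : ℝ) (hδ : 0 < δ)
    (xk xk1 : Fin n → ℝ) (hxk : ∀ i, 0 < xk i)
    (Qm absQ : Matrix (Fin n) (Fin n) ℝ)
    (hQm : Qm = fun i j => max (-(Q i j)) 0)
    (habsQ : absQ = fun i j => |Q i j|)
    (hupd : ∀ i, xk1 i = xk i * (2 * Qm.mulVec xk i + max (h i) 0 + δ)
      / (absQ.mulVec xk i + max (-(h i)) 0 + δ)) :
    ∀ i, xk1 i - xk i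
      = -(xk i / (absQ.mulVec xk i + max (-(h i)) 0 + δ)) * (Q.mulVec xk i - h i) := by
  intro i
  replace hQm : Qm = Q.map (·⁻) := hQm
  replace habsQ : absQ = Q.map (|·|) := habsQ
  have habsQ_nonneg : 0 ≤ (absQ *ᵥ xk) i := by
    rw [habsQ]
    exact mulVec_nonneg (fun _ _ => abs_nonneg _) (fun j => (hxk j).le) i
  have hden : 0 < (absQ *ᵥ xk) i + max (-(h i)) 0 + δ := by
    have := le_max_right (-(h i)) 0
    linarith
  have hQ : 2 * (Qm *ᵥ xk) i - (absQ *ᵥ xk) i = -(Q *ᵥ xk) i := by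
    simpa [hQm, habsQ] using congrFun (two_nsmul_map_negPart_mulVec_sub_map_abs_mulVec Q xk) i
  have hh : max (h i) 0 - max (-(h i)) 0 = h i := posPart_sub_negPart (h i)
  rw [hupd i, mul_div_sub_self_eq_neg_div_mul_sub hden.ne']
  congr 1
  linarith
end

section
/- With D(x^k) diagonal, D(x^k)_ii = ((|Q|x^k)_i + h_i^- + δ)/x_i^k for a positive vector x^k, the Newton-like step x = x^k − D(x^k)^{-1}(Qx^k − h) equals the multiplicative update: x_i = x_i^k · (2(Q^- x^k)_i + h_i^+ + δ)/((|Q|x^k)_i + h_i^- + δ). -/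
/-! Since |Q| = Q + 2Q⁻ and h = h⁺ - h⁻, subtracting (Qxᵏ - h)ᵢ from the numerator
(|Q|xᵏ)ᵢ + hᵢ⁻ + δ of D(xᵏ)ᵢᵢ leaves 2(Q⁻xᵏ)ᵢ + hᵢ⁺ + δ; the step then factors as xᵏᵢ times this
over the numerator of D(xᵏ)ᵢᵢ, which is positive because xᵏ > 0 and δ > 0. -/

open Matrix

theorem abs_eq_add_two_nsmul_negPart {α : Type*} [Lattice α] [AddCommGroup α] [AddLeftMono α]
    (a : α) : |a| = a + 2 • a⁻ := by
  calc |a| = a⁺ + a⁻ := (posPart_add_negPart a).symm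
    _ = (a⁺ - a⁻) + 2 • a⁻ := by abel
    _ = a + 2 • a⁻ := by rw [posPart_sub_negPart]

theorem Matrix.map_abs_mulVec {m n α : Type*} [Fintype n] [CommRing α] [LinearOrder α]
    [IsOrderedRing α] (A : Matrix m n α) (x : n → α) :
    A.map abs *ᵥ x = A *ᵥ x + 2 • (A.map negPart *ᵥ x) := by
  have : A.map abs = A + 2 • A.map negPart := by
    ext i j
    exact abs_eq_add_two_nsmul_negPart (A i j)
  rw [this, add_mulVec, smul_mulVec]

theorem Matrix.mulVec_nonneg_s14 {m n α : Type*} [Fintype n] [Semiring α] [PartialOrder α]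
    [IsOrderedRing α] {A : Matrix m n α} {x : n → α} (hA : ∀ i j, 0 ≤ A i j)
    (hx : ∀ j, 0 ≤ x j) (i : m) :
    0 ≤ (A *ᵥ x) i :=
  Finset.sum_nonneg fun j _ => mul_nonneg (hA i j) (hx j)

theorem sub_div_div_eq_mul_sub_div {α : Type*} [Field α] {x r d : α} (hd : d ≠ 0) :
    x - r / (d / x) = x * (d - r) / d := by
  rw [div_div_eq_mul_div, mul_sub, sub_div, mul_div_cancel_right₀ _ hd, mul_comm]

theorem stmt14 (n : ℕ) (Q : Matrix (Fin n) (Fin n) ℝ)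
    (h : Fin n → ℝ) (δ : ℝ) (hδ : 0 < δ)
    (Qm absQ : Matrix (Fin n) (Fin n) ℝ)
    (hQm : Qm = fun i j => max (-(Q i j)) 0)
    (habsQ : absQ = fun i j => |Q i j|)
    (xk : Fin n → ℝ) (hxk : ∀ i, 0 < xk i)
    (d : Fin n → ℝ)
    (hd : ∀ i, d i = (absQ.mulVec xk i + max (-(h i)) 0 + δ) / xk i) :
    ∀ i, xk i - (Q.mulVec xk i - h i) / d i
      = xk i * (2 * Qm.mulVec xk i + max (h i) 0 + δ)
        / (absQ.mulVec xk i + max (-(h i)) 0 + δ) := by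
  intro i
  replace habsQ : absQ = Q.map abs := habsQ
  replace hQm : Qm = Q.map negPart := hQm
  subst habsQ hQm
  have hQx : 0 ≤ (Q.map abs *ᵥ xk) i :=
    mulVec_nonneg_s14 (fun i j => abs_nonneg (Q i j)) (fun j => (hxk j).le) i
  have hD : 0 < (Q.map abs *ᵥ xk) i + max (-(h i)) 0 + δ := by
    have : 0 ≤ max (-(h i)) 0 := le_max_right _ _
    linarith
  have h_split : max (h i) 0 - max (-(h i)) 0 = h i := posPart_sub_negPart (h i)
  rw [hd i, sub_div_div_eq_mul_sub_div hD.ne', map_abs_mulVec, Pi.add_apply, Pi.smul_apply,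
    nsmul_eq_mul, Nat.cast_ofNat]
  congr 2
  linarith
end

section
/- Let F(x) = (1/2)xᵀQx − xᵀh with Q symmetric positive definite, and let x^{k+1} be defined by the multiplicative update x_i^{k+1} = x_i^k (2(Q^-x^k)_i + h_i^+ + δ)/((|Q|x^k)_i + h_i^- + δ) starting from a positive x^0. Then F(x^{k+1}) ≤ F(x^k) for all k, with strict inequality whenever x^{k+1} ≠ x^k. -/
/-!
Write `d(y)ᵢ = (|Q| y)ᵢ + hᵢ⁻ + δ` and `z` for the update of `y`. Since `|Q| = Q + 2Q⁻`
and `h = h⁺ - h⁻`, the update is the scaled gradient step `d(y)ᵢ (zᵢ - yᵢ) = -yᵢ (Qy - h)ᵢ`,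
i.e. `z` minimises the surrogate `G(·, y)` with curvature `D(y) = diag(d(y)ᵢ / yᵢ)`.
A weighted AM-GM inequality on each pair `(i, j)`, together with the symmetry of `Q`, gives
`sᵀ Q s ≤ ∑ᵢ (|Q| y)ᵢ / yᵢ sᵢ²`, so `D(y) - Q` is positive definite and
`F(z) + ½ (z - y)ᵀ D(y) (z - y) ≤ F(y)`. The update keeps the iterates positive, so this
applies at every step.
-/

open Matrix

variable {ι : Type*}

lemma two_mul_mul_le_abs_mul {p r : ℝ} (hp : 0 < p) (hr : 0 < r) (a q b : ℝ) :
    2 * (a * (q * b)) ≤ |q| * (r / p * a ^ 2) + |q| * (p / r * b ^ 2) := by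
  have key : 2 * (p * r) * (a * (q * b)) ≤ |q| * (r * a) ^ 2 + |q| * (p * b) ^ 2 := by
    rcases abs_cases q with ⟨hq, hq0⟩ | ⟨hq, hq0⟩ <;> rw [hq]
    · nlinarith [mul_nonneg hq0 (sq_nonneg (r * a - p * b))]
    · nlinarith [mul_nonneg (neg_nonneg.2 hq0.le) (sq_nonneg (r * a + p * b))]
  have hdiv : |q| * (r / p * a ^ 2) + |q| * (p / r * b ^ 2)
      = (|q| * (r * a) ^ 2 + |q| * (p * b) ^ 2) / (p * r) := by
    field_simp
  rw [hdiv, le_div_iff₀ (by positivity)]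
  linarith

lemma map_abs_eq_add_two_smul_map_negPart (Q : Matrix ι ι ℝ) :
    Q.map abs = Q + (2 : ℝ) • Q.map (fun a => max (-a) 0) := by
  ext i j
  simp only [map_apply, Matrix.add_apply, Matrix.smul_apply, smul_eq_mul]
  rcases le_total (Q i j) 0 with hq | hq
  · rw [abs_of_nonpos hq, max_eq_left (by linarith)]; ring
  · rw [abs_of_nonneg hq, max_eq_right (by linarith)]; ring

variable [Fintype ι]

theorem dotProduct_mulVec_le_sum_abs_mulVec_div {Q : Matrix ι ι ℝ} (hQ : Q.IsSymm)
    {y : ι → ℝ} (hy : ∀ i, 0 < y i) (s : ι → ℝ) :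
    s ⬝ᵥ Q *ᵥ s ≤ ∑ i, (Q.map abs *ᵥ y) i / y i * s i ^ 2 := by
  set T : ι → ι → ℝ := fun i j => |Q i j| * (y j / y i * s i ^ 2)
  have hT : ∑ i, (Q.map abs *ᵥ y) i / y i * s i ^ 2 = ∑ i, ∑ j, T i j := by
    simp only [mulVec, dotProduct, map_apply, Finset.sum_div, Finset.sum_mul, T]
    exact Fintype.sum_congr _ _ fun i => Fintype.sum_congr _ _ fun j => by ring
  have hterm : ∀ i j, 2 * (s i * (Q i j * s j)) ≤ T i j + T j i := fun i j => by
    simpa only [T, hQ.apply] using two_mul_mul_le_abs_mul (hy i) (hy j) (s i) (Q i j) (s j)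
  have : 2 * (s ⬝ᵥ Q *ᵥ s) ≤ 2 * ∑ i, ∑ j, T i j := calc
    2 * (s ⬝ᵥ Q *ᵥ s) = ∑ i, ∑ j, 2 * (s i * (Q i j * s j)) := by
      simp only [dotProduct, mulVec, Finset.mul_sum]
    _ ≤ ∑ i, ∑ j, (T i j + T j i) := by gcongr with i _ j _; exact hterm i j
    _ = 2 * ∑ i, ∑ j, T i j := by
      simp only [Finset.sum_add_distrib]
      rw [Finset.sum_comm (f := fun i j => T j i), two_mul]
  linarith

noncomputable def quadraticObjective (Q : Matrix ι ι ℝ) (h x : ι → ℝ) : ℝ :=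
  (1 / 2) * (x ⬝ᵥ Q *ᵥ x) - x ⬝ᵥ h

theorem quadraticObjective_add {Q : Matrix ι ι ℝ} (hQ : Q.IsSymm) (h y s : ι → ℝ) :
    quadraticObjective Q h (y + s)
      = quadraticObjective Q h y + s ⬝ᵥ (Q *ᵥ y - h) + (1 / 2) * (s ⬝ᵥ Q *ᵥ s) := by
  have hcross : y ⬝ᵥ Q *ᵥ s = s ⬝ᵥ Q *ᵥ y := by
    rw [dotProduct_mulVec, ← mulVec_transpose, hQ.eq, dotProduct_comm]
  simp only [quadraticObjective, mulVec_add, dotProduct_add, add_dotProduct, dotProduct_sub,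
    hcross]
  ring

theorem quadraticObjective_add_le_of_step {Q : Matrix ι ι ℝ} (hQ : Q.IsSymm) (h : ι → ℝ)
    {y z w : ι → ℝ} (hy : ∀ i, 0 < y i) (hw : ∀ i, (Q.map abs *ᵥ y) i ≤ w i * y i)
    (hstep : ∀ i, w i * (z i - y i) = h i - (Q *ᵥ y) i) :
    quadraticObjective Q h z + (1 / 2) * ∑ i, w i * (z i - y i) ^ 2
      ≤ quadraticObjective Q h y := by
  have hlin : (z - y) ⬝ᵥ (Q *ᵥ y - h) = -∑ i, w i * (z i - y i) ^ 2 := by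
    simp only [dotProduct, ← Finset.sum_neg_distrib, Pi.sub_apply]
    exact Fintype.sum_congr _ _ fun i => by linear_combination (z i - y i) * hstep i
  have hquad : (z - y) ⬝ᵥ Q *ᵥ (z - y) ≤ ∑ i, w i * (z i - y i) ^ 2 := by
    refine (dotProduct_mulVec_le_sum_abs_mulVec_div hQ hy _).trans ?_
    exact Finset.sum_le_sum fun i _ =>
      mul_le_mul_of_nonneg_right ((div_le_iff₀ (hy i)).2 (hw i)) (sq_nonneg _)
  have hexpand := quadraticObjective_add hQ h y (z - y)
  rw [add_sub_cancel] at hexpand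
  linarith

section MultiplicativeUpdate

variable (Q : Matrix ι ι ℝ) (h : ι → ℝ) (δ : ℝ)

def multUpdateDenom (y : ι → ℝ) (i : ι) : ℝ :=
  (Q.map abs *ᵥ y) i + max (-h i) 0 + δ

noncomputable def multUpdate (y : ι → ℝ) (i : ι) : ℝ :=
  y i * (2 * (Q.map (fun a => max (-a) 0) *ᵥ y) i + max (h i) 0 + δ)
    / multUpdateDenom Q h δ y i

variable {Q h δ}

lemma mulVec_map_nonneg {f : ℝ → ℝ} (hf : ∀ a, 0 ≤ f a) {y : ι → ℝ} (hy : ∀ i, 0 ≤ y i)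
    (i : ι) : 0 ≤ (Q.map f *ᵥ y) i :=
  Finset.sum_nonneg fun j _ => mul_nonneg (hf _) (hy j)

lemma multUpdateDenom_pos (hδ : 0 < δ) {y : ι → ℝ} (hy : ∀ i, 0 ≤ y i) (i : ι) :
    0 < multUpdateDenom Q h δ y i := by
  have := mulVec_map_nonneg abs_nonneg hy i (Q := Q)
  unfold multUpdateDenom
  positivity

lemma multUpdate_pos (hδ : 0 < δ) {y : ι → ℝ} (hy : ∀ i, 0 < y i) (i : ι) :
    0 < multUpdate Q h δ y i := by
  have := mulVec_map_nonneg (fun a => le_max_right (-a) 0) (fun j => (hy j).le) i (Q := Q)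
  have := multUpdateDenom_pos (h := h) hδ (fun j => (hy j).le) i (Q := Q)
  have := hy i
  unfold multUpdate
  positivity

lemma multUpdateDenom_mul_multUpdate_sub (hδ : 0 < δ) {y : ι → ℝ} (hy : ∀ i, 0 ≤ y i)
    (i : ι) :
    multUpdateDenom Q h δ y i * (multUpdate Q h δ y i - y i) = y i * (h i - (Q *ᵥ y) i) := by
  have hd := (multUpdateDenom_pos (h := h) hδ hy i (Q := Q)).ne'
  have habs :
      (Q.map abs *ᵥ y) i = (Q *ᵥ y) i + 2 * (Q.map (fun a => max (-a) 0) *ᵥ y) i := by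
    rw [map_abs_eq_add_two_smul_map_negPart, add_mulVec, smul_mulVec]; rfl
  have hh : max (h i) 0 - max (-h i) 0 = h i := max_zero_sub_max_neg_zero_eq_self (h i)
  unfold multUpdate
  rw [mul_sub, mul_div_cancel₀ _ hd]
  unfold multUpdateDenom
  rw [habs]
  linear_combination y i * hh

theorem quadraticObjective_multUpdate_add_le (hQ : Q.IsSymm) (hδ : 0 < δ) {y : ι → ℝ}
    (hy : ∀ i, 0 < y i) :
    quadraticObjective Q h (multUpdate Q h δ y)
        + (1 / 2) * ∑ i, multUpdateDenom Q h δ y i / y i * (multUpdate Q h δ y i - y i) ^ 2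
      ≤ quadraticObjective Q h y := by
  refine quadraticObjective_add_le_of_step hQ h hy (fun i => ?_) (fun i => ?_)
  · rw [div_mul_cancel₀ _ (hy i).ne']
    unfold multUpdateDenom
    linarith [le_max_right (-h i) 0]
  · rw [div_mul_eq_mul_div, div_eq_iff (hy i).ne',
      multUpdateDenom_mul_multUpdate_sub hδ fun j => (hy j).le]
    ring

lemma multUpdateDenom_div_pos (hδ : 0 < δ) {y : ι → ℝ} (hy : ∀ i, 0 < y i) (i : ι) :
    0 < multUpdateDenom Q h δ y i / y i :=
  div_pos (multUpdateDenom_pos hδ (fun j => (hy j).le) i) (hy i)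

theorem quadraticObjective_multUpdate_le (hQ : Q.IsSymm) (hδ : 0 < δ) {y : ι → ℝ}
    (hy : ∀ i, 0 < y i) :
    quadraticObjective Q h (multUpdate Q h δ y) ≤ quadraticObjective Q h y := by
  have hsum : 0 ≤ ∑ i, multUpdateDenom Q h δ y i / y i * (multUpdate Q h δ y i - y i) ^ 2 :=
    Finset.sum_nonneg fun i _ => mul_nonneg (multUpdateDenom_div_pos hδ hy i).le (sq_nonneg _)
  linarith [quadraticObjective_multUpdate_add_le (h := h) hQ hδ hy]

theorem quadraticObjective_multUpdate_lt (hQ : Q.IsSymm) (hδ : 0 < δ) {y : ι → ℝ}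
    (hy : ∀ i, 0 < y i) (hne : multUpdate Q h δ y ≠ y) :
    quadraticObjective Q h (multUpdate Q h δ y) < quadraticObjective Q h y := by
  obtain ⟨i, hi⟩ := Function.ne_iff.1 hne
  have hsum : 0 < ∑ i, multUpdateDenom Q h δ y i / y i * (multUpdate Q h δ y i - y i) ^ 2 :=
    Finset.sum_pos' (fun j _ => mul_nonneg (multUpdateDenom_div_pos hδ hy j).le (sq_nonneg _))
      ⟨i, Finset.mem_univ i, mul_pos (multUpdateDenom_div_pos hδ hy i)
        (pow_two_pos_of_ne_zero (sub_ne_zero.2 hi))⟩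
  linarith [quadraticObjective_multUpdate_add_le (h := h) hQ hδ hy]

end MultiplicativeUpdate

theorem stmt16 (n : ℕ) (Q : Matrix (Fin n) (Fin n) ℝ) (hQ : Q.PosDef)
    (h : Fin n → ℝ) (δ : ℝ) (hδ : 0 < δ)
    (Qm absQ : Matrix (Fin n) (Fin n) ℝ)
    (hQm : Qm = fun i j => max (-(Q i j)) 0)
    (habsQ : absQ = fun i j => |Q i j|)
    (F : (Fin n → ℝ) → ℝ)
    (hF : ∀ x, F x = (1/2) * (x ⬝ᵥ Q.mulVec x) - x ⬝ᵥ h)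
    (x : ℕ → Fin n → ℝ) (hx0 : ∀ i, 0 < x 0 i)
    (hupd : ∀ k i, x (k+1) i = x k i * (2 * Qm.mulVec (x k) i + max (h i) 0 + δ)
      / (absQ.mulVec (x k) i + max (-(h i)) 0 + δ)) :
    ∀ k, F (x (k+1)) ≤ F (x k) ∧ (x (k+1) ≠ x k → F (x (k+1)) < F (x k)) := by
  subst hQm habsQ
  have hsymm : Q.IsSymm := isHermitian_iff_isSymm.1 hQ.isHermitian
  have hF' : F = quadraticObjective Q h := funext hF
  have hstep : ∀ k, x (k + 1) = multUpdate Q h δ (x k) := fun k => funext (hupd k)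
  have hpos : ∀ k i, 0 < x k i := by
    intro k
    induction k with
    | zero => exact hx0
    | succ k ih => rw [hstep]; exact multUpdate_pos hδ ih
  intro k
  rw [hF', hstep]
  exact ⟨quadraticObjective_multUpdate_le hsymm hδ (hpos k),
    quadraticObjective_multUpdate_lt hsymm hδ (hpos k)⟩
end

section
/- Let x* ≥ 0 and μ ≥ 0 satisfy the KKT conditions for min F(x) = (1/2)xᵀQx − xᵀh subject to x ≥ 0: that is, Qx* − h − μ = 0 componentwise where x*_i > 0 implies μ_i = 0, and μ_i x*_i = 0. Then for each i with x*_i > 0, (Qx*)_i = h_i, and therefore x* is a fixed point of the multiplicative update x_i ↦ x_i (2(Q^-x)_i + h_i^+ + δ)/((|Q|x)_i + h_i^- + δ). -/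
/-! Where `xs i > 0`, complementary slackness kills `μ i`, so stationarity gives `(Q xs)_i = h_i`.
Since `|q| = q + 2 q⁻` and `h⁺ = h + h⁻`, the numerator `2 (Q⁻ xs)_i + h_i⁺ + δ` of the update then
equals its denominator `(|Q| xs)_i + h_i⁻ + δ`, which is positive because `δ > 0`. -/

open Matrix

section LinearOrderedRing

variable {α : Type*} [Ring α] [LinearOrder α] [IsOrderedRing α]

lemma max_zero_eq_add_max_neg_zero (a : α) : max a 0 = a + max (-a) 0 :=
  eq_add_of_sub_eq (posPart_sub_negPart a)

lemma abs_eq_add_two_mul_max_neg_zero (a : α) : |a| = a + 2 * max (-a) 0 :=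
  calc |a| = max a 0 + max (-a) 0 := (posPart_add_negPart a).symm
    _ = a + 2 * max (-a) 0 := by rw [max_zero_eq_add_max_neg_zero a, two_mul, add_assoc]

lemma Matrix.map_abs_eq_add_two_smul {m n : Type*} (Q : Matrix m n α) :
    Q.map (|·|) = Q + (2 : α) • Q.map (fun q => max (-q) 0) := by
  ext i j
  simp [abs_eq_add_two_mul_max_neg_zero]

end LinearOrderedRing

lemma eq_of_stationarity_of_complementarity {R : Type*} [Ring R] [NoZeroDivisors R]
    {a b m x : R} (hstat : (a - b - m) * x = 0) (hcs : m * x = 0) (hx : x ≠ 0) : a = b := by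
  have hm : m = 0 := (mul_eq_zero.mp hcs).resolve_right hx
  have hstat' := (mul_eq_zero.mp hstat).resolve_right hx
  rwa [hm, sub_zero, sub_eq_zero] at hstat'

theorem stmt17_general (n : ℕ) (Q : Matrix (Fin n) (Fin n) ℝ)
    (h : Fin n → ℝ) (δ : ℝ) (hδ : 0 < δ)
    (Qm absQ : Matrix (Fin n) (Fin n) ℝ)
    (hQm : Qm = fun i j => max (-(Q i j)) 0)
    (habsQ : absQ = fun i j => |Q i j|)
    (xs μ : Fin n → ℝ) (hxs : ∀ i, 0 ≤ xs i)
    (hstat : ∀ i, (Q.mulVec xs i - h i - μ i) * xs i = 0)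
    (hcs : ∀ i, μ i * xs i = 0) :
    (∀ i, 0 < xs i → Q.mulVec xs i = h i) ∧
    (∀ i, xs i * ((2 * Qm.mulVec xs i + max (h i) 0 + δ)
      / (absQ.mulVec xs i + max (-(h i)) 0 + δ)) = xs i) := by
  have hQx : ∀ i, xs i ≠ 0 → Q.mulVec xs i = h i := fun i hi =>
    eq_of_stationarity_of_complementarity (hstat i) (hcs i) hi
  refine ⟨fun i hi => hQx i hi.ne', fun i => ?_⟩
  rcases eq_or_ne (xs i) 0 with hi | hi
  · rw [hi, zero_mul]
  have habs : absQ = Q + (2 : ℝ) • Qm := by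
    rw [hQm, habsQ]
    exact Q.map_abs_eq_add_two_smul
  have hden : 0 < (absQ *ᵥ xs) i + max (-(h i)) 0 + δ := by
    have : 0 ≤ (absQ *ᵥ xs) i := dotProduct_nonneg_of_nonneg (fun j => by simp [habsQ]) hxs
    positivity
  have hnum : 2 * (Qm *ᵥ xs) i + max (h i) 0 + δ = (absQ *ᵥ xs) i + max (-(h i)) 0 + δ := by
    rw [habs, add_mulVec, smul_mulVec, Pi.add_apply, Pi.smul_apply, smul_eq_mul, hQx i hi,
      max_zero_eq_add_max_neg_zero]
    ring
  rw [hnum, div_self hden.ne', mul_one]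

theorem stmt17 (n : ℕ) (Q : Matrix (Fin n) (Fin n) ℝ) (hQ : Q.IsSymm)
    (h : Fin n → ℝ) (δ : ℝ) (hδ : 0 < δ)
    (Qm absQ : Matrix (Fin n) (Fin n) ℝ)
    (hQm : Qm = fun i j => max (-(Q i j)) 0)
    (habsQ : absQ = fun i j => |Q i j|)
    (xs μ : Fin n → ℝ) (hxs : ∀ i, 0 ≤ xs i) (hμ : ∀ i, 0 ≤ μ i)
    (hstat : ∀ i, (Q.mulVec xs i - h i - μ i) * xs i = 0)
    (hcs : ∀ i, μ i * xs i = 0) :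
    (∀ i, 0 < xs i → Q.mulVec xs i = h i) ∧
    (∀ i, xs i * ((2 * Qm.mulVec xs i + max (h i) 0 + δ)
      / (absQ.mulVec xs i + max (-(h i)) 0 + δ)) = xs i) :=
  stmt17_general n Q h δ hδ Qm absQ hQm habsQ xs μ hxs hstat hcs
end
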